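/- arXiv:2011.15115 — 4 statements merged into one kernel-verified Lean document; each statement's English description precedes it below -/
import Mathlib

section
/- For all natural numbers m and d with 2 ≤ d and d + 2 ≤ m, the following identity holds in ℤ: Σ_{j=0}^{d} (1−j) · C(m−d−2+j, j) = Σ_{j=0}^{m−d} (1−j) · C(d−2+j, j). -/
lemma lp_genus_key (b n : ℕ) :
    ∑ j ∈ Finset.range (n + 2), (1 - (j : ℤ)) * (Nat.choose (b + j) j : ℤ) =
      (Nat.choose (b + n + 2) (n + 1) : ℤ) - ((b : ℤ) + 1) * (Nat.choose (b + n + 2) n : ℤ) := by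
  induction n with
  | zero => simp [Finset.sum_range_succ]
  | succ n ih =>
      rw [Finset.sum_range_succ, ih]
      have h1 : (b + (n + 1) + 2).choose (n + 1 + 1)
          = (b + n + 2).choose (n + 1) + (b + n + 2).choose (n + 2) := by
        rw [show b + (n + 1) + 2 = (b + n + 2) + 1 by ring]
        exact Nat.choose_succ_succ _ _
      have h2 : (b + (n + 1) + 2).choose (n + 1)
          = (b + n + 2).choose n + (b + n + 2).choose (n + 1) := by
        rw [show b + (n + 1) + 2 = (b + n + 2) + 1 by ring]
        exact Nat.choose_succ_succ _ _
      have h3 : (b + n + 2).choose (n + 2) * (n + 2) = (b + n + 2).choose (n + 1) * (b + 1) := by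
        have := Nat.choose_succ_right_eq (b + n + 2) (n + 1)
        rwa [show b + n + 2 - (n + 1) = b + 1 by omega] at this
      have h3' : ((b + n + 2).choose (n + 2) : ℤ) * ((n : ℤ) + 2)
          = ((b + n + 2).choose (n + 1) : ℤ) * ((b : ℤ) + 1) := by exact_mod_cast h3
      rw [h1, h2]
      push_cast
      ring_nf
      ring_nf at h3'
      linarith

/-- Symmetry of the arithmetic genus for linear programming central curves: for `2 ≤ d`
and `d + 2 ≤ m`,
`∑_{j=0}^{d} (1-j)·C(m-d-2+j, j) = ∑_{j=0}^{m-d} (1-j)·C(d-2+j, j)` in `ℤ`. -/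
theorem lp_genus_symmetry (m d : ℕ) (hd : 2 ≤ d) (hm : d + 2 ≤ m) :
    ∑ j ∈ Finset.range (d + 1), (1 - (j : ℤ)) * (Nat.choose (m - d - 2 + j) j : ℤ) =
      ∑ j ∈ Finset.range (m - d + 1), (1 - (j : ℤ)) * (Nat.choose (d - 2 + j) j : ℤ) := by
  obtain ⟨a, ha⟩ : ∃ a, d = a + 2 := ⟨d - 2, by omega⟩
  obtain ⟨b, hb⟩ : ∃ b, m = a + b + 4 := ⟨m - d - 2, by omega⟩
  subst ha hb
  have e1 : a + b + 4 - (a + 2) - 2 = b := by omega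
  have e2 : a + b + 4 - (a + 2) = b + 2 := by omega
  have e3 : a + 2 - 2 = a := by omega
  rw [e1, e2, e3]
  have L := lp_genus_key b (a + 1)
  have R := lp_genus_key a (b + 1)
  rw [show a + 2 + 1 = (a + 1) + 2 by ring, L,
      show b + 2 + 1 = (b + 1) + 2 by ring, R]
  have s1 : (b + (a + 1) + 2).choose (a + 1 + 1) = (a + b + 3).choose (b + 1) := by
    rw [show b + (a + 1) + 2 = a + b + 3 by ring]
    rw [show b + 1 = a + b + 3 - (a + 2) by omega]
    exact (Nat.choose_symm (by omega)).symm
  have s2 : (b + (a + 1) + 2).choose (a + 1) = (a + b + 3).choose (b + 2) := by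
    rw [show b + (a + 1) + 2 = a + b + 3 by ring]
    rw [show b + 2 = a + b + 3 - (a + 1) by omega]
    exact (Nat.choose_symm (by omega)).symm
  have s3 : a + (b + 1) + 2 = a + b + 3 := by ring
  rw [s1, s2, s3]
  have h : (a + b + 3).choose (b + 2) * (b + 2) = (a + b + 3).choose (b + 1) * (a + 2) := by
    have := Nat.choose_succ_right_eq (a + b + 3) (b + 1)
    rwa [show a + b + 3 - (b + 1) = a + 2 by omega] at this
  have h' : ((a + b + 3).choose (b + 2) : ℤ) * ((b : ℤ) + 2)
      = ((a + b + 3).choose (b + 1) : ℤ) * ((a : ℤ) + 2) := by exact_mod_cast h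
  linarith
end

section
/- For all natural numbers m and d with 2 ≤ d and d + 2 ≤ m, the following identity holds in ℤ: d! · (m−d)! · Σ_{j=0}^{d} (1−j) · C(m−d−2+j, j) = (m−1)! · (m − m·d + d²). -/
lemma lp_sum_lemma (n d : ℕ) :
    ∑ j ∈ Finset.range (d + 2), (1 - (j : ℤ)) * (Nat.choose (n + j) j : ℤ) =
      (Nat.choose (n + d + 2) (d + 1) : ℤ) - (n + 1) * (Nat.choose (n + d + 2) d : ℤ) := by
  induction d with
  | zero =>
      simp [Finset.sum_range_succ, Nat.choose_one_right]
  | succ d ih =>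
      rw [Finset.sum_range_succ, ih]
      have key : (Nat.choose (n + d + 2) (d + 2) : ℤ) * (d + 2) =
          (Nat.choose (n + d + 2) (d + 1) : ℤ) * (n + 1) := by
        have := Nat.choose_succ_right_eq (n + d + 2) (d + 1)
        have h2 : n + d + 2 - (d + 1) = n + 1 := by omega
        rw [h2] at this
        exact_mod_cast this
      have p1 : (Nat.choose (n + (d + 1) + 2) (d + 2) : ℤ) =
          (Nat.choose (n + d + 2) (d + 1) : ℤ) + (Nat.choose (n + d + 2) (d + 2) : ℤ) := by
        have : n + (d + 1) + 2 = (n + d + 2) + 1 := by omega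
        rw [this, Nat.choose_succ_succ]
        push_cast; ring
      have p2 : (Nat.choose (n + (d + 1) + 2) (d + 1) : ℤ) =
          (Nat.choose (n + d + 2) d : ℤ) + (Nat.choose (n + d + 2) (d + 1) : ℤ) := by
        have : n + (d + 1) + 2 = (n + d + 2) + 1 := by omega
        rw [this, Nat.choose_succ_succ]
        push_cast; ring
      simp only [show n + (d + 2) = n + d + 2 from by omega,
        show d + 1 + 1 = d + 2 from rfl] at *
      rw [p1, p2]
      push_cast
      linarith [key]

/-- Closed-form evaluation in the proof of the genus-symmetry theorem: for `2 ≤ d` and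
`d + 2 ≤ m`,
`d!·(m-d)!·∑_{j=0}^{d} (1-j)·C(m-d-2+j, j) = (m-1)!·(m - m·d + d²)` in `ℤ`. -/
theorem lp_genus_closed_form (m d : ℕ) (hd : 2 ≤ d) (hm : d + 2 ≤ m) :
    (Nat.factorial d : ℤ) * (Nat.factorial (m - d) : ℤ) *
        ∑ j ∈ Finset.range (d + 1), (1 - (j : ℤ)) * (Nat.choose (m - d - 2 + j) j : ℤ) =
      (Nat.factorial (m - 1) : ℤ) * ((m : ℤ) - (m : ℤ) * (d : ℤ) + (d : ℤ) ^ 2) := by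
  obtain ⟨k, rfl⟩ : ∃ k, d = k + 2 := ⟨d - 2, by omega⟩
  obtain ⟨n, rfl⟩ : ∃ n, m = n + k + 4 := ⟨m - k - 4, by omega⟩
  have h1 : n + k + 4 - (k + 2) - 2 = n := by omega
  have h2 : n + k + 4 - (k + 2) = n + 2 := by omega
  have h3 : n + k + 4 - 1 = n + k + 3 := by omega
  have h4 : k + 2 + 1 = (k + 1) + 2 := by omega
  rw [h1, h2, h3, h4, lp_sum_lemma n (k + 1)]
  have hA := Nat.choose_mul_factorial_mul_factorial (show k + 2 ≤ n + k + 3 by omega)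
  have hB := Nat.choose_mul_factorial_mul_factorial (show k + 1 ≤ n + k + 3 by omega)
  have e1 : n + k + 3 - (k + 2) = n + 1 := by omega
  have e2 : n + k + 3 - (k + 1) = n + 2 := by omega
  rw [e1] at hA
  rw [e2] at hB
  have hA' : (Nat.choose (n + k + 3) (k + 2) : ℤ) * (Nat.factorial (k + 2) : ℤ) *
      (Nat.factorial (n + 1) : ℤ) = (Nat.factorial (n + k + 3) : ℤ) := by exact_mod_cast hA
  have hB' : (Nat.choose (n + k + 3) (k + 1) : ℤ) * (Nat.factorial (k + 1) : ℤ) *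
      (Nat.factorial (n + 2) : ℤ) = (Nat.factorial (n + k + 3) : ℤ) := by exact_mod_cast hB
  have hF : (Nat.factorial (k + 2) : ℤ) = (k + 2) * (Nat.factorial (k + 1) : ℤ) := by
    rw [Nat.factorial_succ]; push_cast; ring
  have hG : (Nat.factorial (n + 2) : ℤ) = (n + 2) * (Nat.factorial (n + 1) : ℤ) := by
    rw [Nat.factorial_succ]; push_cast; ring
  simp only [show n + (k + 1) + 2 = n + k + 3 from by omega,
    show k + 1 + 1 = k + 2 from rfl] at *
  rw [hF] at hA'
  rw [hG] at hB'
  rw [hF, hG]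
  push_cast
  linear_combination ((n : ℤ) + 2) * hA' - ((k : ℤ) + 2) * ((n : ℤ) + 1) * hB'
end

section
/- For all natural numbers m and d with 2 ≤ d and d + 2 ≤ m, the following identity holds in ℤ: d! · (m−d)! · Σ_{j=0}^{m−d} (1−j) · C(d−2+j, j) = (m−1)! · (m − m·d + d²). -/
lemma lp_key (e n : ℕ) :
    ((e+2).factorial : ℤ) * (n.factorial : ℤ) *
        ∑ j ∈ Finset.range (n + 1), (1 - (j : ℤ)) * ((e + j).choose j : ℤ) =
      ((e + n + 1).factorial : ℤ) * ((e : ℤ) + 2 + n - n * ((e : ℤ) + 2)) := by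
  induction n with
  | zero =>
    simp [Nat.factorial_succ]
    ring
  | succ n ih =>
    rw [Finset.sum_range_succ]
    have h1 : (((e + (n+1)).choose (n+1) : ℕ) : ℤ) * ((n+1).factorial : ℤ) * (e.factorial : ℤ)
        = ((e + n + 1).factorial : ℤ) := by
      have := Nat.choose_mul_factorial_mul_factorial (show n+1 ≤ e+(n+1) by omega)
      have h2 : e + (n+1) - (n+1) = e := by omega
      rw [h2] at this
      exact_mod_cast (by rw [this]; ring_nf : (e + (n+1)).choose (n+1) * (n+1).factorial * e.factorial = (e+n+1).factorial)
    have hf2 : ((e+2).factorial : ℤ) = ((e:ℤ)+2) * ((e:ℤ)+1) * (e.factorial : ℤ) := by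
      push_cast [Nat.factorial_succ]; ring
    have hfn : (((n+1).factorial : ℕ) : ℤ) = ((n:ℤ)+1) * (n.factorial : ℤ) := by
      push_cast [Nat.factorial_succ]; ring
    have hfe : ((e + (n+1) + 1).factorial : ℤ) = ((e:ℤ)+n+2) * ((e + n + 1).factorial : ℤ) := by
      have : e + (n+1) + 1 = (e + n + 1) + 1 := by omega
      rw [this, Nat.factorial_succ]; push_cast; ring
    have hc : e + (n+1) = e + n + 1 := by omega
    rw [hc] at h1
    rw [hfn] at h1
    rw [hf2] at ih ⊢
    rw [hfe, hfn]
    simp only [hc]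
    push_cast at h1 ih ⊢
    linear_combination ((n:ℤ)+1) * ih + (1 - ((n:ℤ)+1)) * ((e:ℤ)+2) * ((e:ℤ)+1) * h1

/-- Second closed-form evaluation in the proof of the genus-symmetry theorem: for `2 ≤ d`
and `d + 2 ≤ m`,
`d!·(m-d)!·∑_{j=0}^{m-d} (1-j)·C(d-2+j, j) = (m-1)!·(m - m·d + d²)` in `ℤ`. -/
theorem lp_genus_closed_form' (m d : ℕ) (hd : 2 ≤ d) (hm : d + 2 ≤ m) :
    (Nat.factorial d : ℤ) * (Nat.factorial (m - d) : ℤ) *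
        ∑ j ∈ Finset.range (m - d + 1), (1 - (j : ℤ)) * (Nat.choose (d - 2 + j) j : ℤ) =
      (Nat.factorial (m - 1) : ℤ) * ((m : ℤ) - (m : ℤ) * (d : ℤ) + (d : ℤ) ^ 2) := by
  obtain ⟨e, rfl⟩ : ∃ e, d = e + 2 := ⟨d - 2, by omega⟩
  obtain ⟨n, rfl⟩ : ∃ n, m = e + 2 + n := ⟨m - (e + 2), by omega⟩
  have h1 : e + 2 + n - (e + 2) = n := by omega
  have h2 : e + 2 + n - 1 = e + n + 1 := by omega
  have h3 : ∀ j, e + 2 - 2 + j = e + j := fun j => by omega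
  simp only [h1, h2, h3]
  rw [lp_key e n]
  push_cast
  ring
end

section
/- For all natural numbers m and d with 1 ≤ d and d + 2 ≤ m, the binomial identity Σ_{j=1}^{d} j · C(m−d−2+j, j) = (m−d−1) · C(m−1, d−1) holds. -/
lemma genus_binomial_aux (r n : ℕ) :
    ∑ j ∈ Finset.Icc 1 (n + 1), j * Nat.choose (r + j) j =
      (r + 1) * Nat.choose (r + n + 2) n := by
  induction n with
  | zero => simp [Nat.choose_one_right]
  | succ n ih =>
    rw [show n + 1 + 1 = (n + 1) + 1 from rfl,
      Finset.sum_Icc_succ_top (by omega : 1 ≤ n + 1 + 1), ih]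
    have h1 : Nat.choose (r + (n + 2)) (n + 2) * (n + 2)
        = Nat.choose (r + (n + 2)) (n + 1) * (r + (n + 2) - (n + 1)) :=
      Nat.choose_succ_right_eq _ _
    have h2 : r + (n + 2) - (n + 1) = r + 1 := by omega
    have h3 : (n + 2) * Nat.choose (r + (n + 2)) (n + 2)
        = (r + 1) * Nat.choose (r + (n + 2)) (n + 1) := by
      rw [h2] at h1; rw [mul_comm, h1, mul_comm]
    rw [show n + 1 + 1 = n + 2 from rfl, h3,
      show r + (n + 1) + 2 = (r + (n + 2)) + 1 from by omega,
      show r + n + 2 = r + (n + 2) from by omega,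
      Nat.choose_succ_succ (r + (n + 2)) n]
    ring

/-- The binomial identity `∑_{j=1}^{d} j·C(m-d-2+j, j) = (m-d-1)·C(m-1, d-1)` used in the
proof of the genus-symmetry theorem, for `1 ≤ d` and `d + 2 ≤ m`. -/
theorem genus_binomial_identity (m d : ℕ) (hd : 1 ≤ d) (hm : d + 2 ≤ m) :
    ∑ j ∈ Finset.Icc 1 d, j * Nat.choose (m - d - 2 + j) j =
      (m - d - 1) * Nat.choose (m - 1) (d - 1) := by
  obtain ⟨n, rfl⟩ : ∃ n, d = n + 1 := ⟨d - 1, by omega⟩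
  have h := genus_binomial_aux (m - (n + 1) - 2) n
  rw [show m - (n + 1) - 2 + n + 2 = m - 1 from by omega,
    show m - (n + 1) - 2 + 1 = m - (n + 1) - 1 from by omega,
    show (n : ℕ) + 1 - 1 = n from rfl] at *
  exact h
end
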